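/- A priori error estimate for two-grid Algorithm 4.2 (core of Theorem 4.6): There exists a constant C depending only on T, ν₀, μ_B and K₁ such that the following holds for every time step Δt > 0 with NΔt = T. Let δ ≥ 0 and let (W^n)_{n=0}^N be a sequence in H with W^0 = 0 such that for every 1 ≤ n ≤ N and every v ∈ H, ((W^n − W^{n−1})/Δt, v) + A(W^n, v) + Δt Σ_{i=1}^{n−1} ω_{n,i} G_i(v) + Δt ω_{n,n} E_n(v) = 0, where the functionals G_i, E_n : H → ℝ satisfy |G_i(v)| ≤ μ_B ‖W^i‖₁ ‖v‖₁ and |E_n(v)| ≤ μ_B δ ‖v‖₁ for all v ∈ H. Then for every 1 ≤ n ≤ N: ‖W^n‖² + Σ_{i=1}^n ‖W^i − W^{i−1}‖² + ν₀ Δt Σ_{i=1}^n ‖W^i‖₁² ≤ C Δt δ²; in particular ‖W^n‖ ≤ C^{1/2} √Δt δ. -/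

import Mathlib

/-!
Test the scheme at step `n` with `Wⁿ`. By `2⟪x - y, x⟫ = ‖x‖² - ‖y‖² + ‖x - y‖²` and coercivity
of `A`, Young's inequality absorbs the memory and `Eₙ` terms into the dissipation. By
Cauchy–Schwarz the memory sum costs `(n - 1) Δt ≤ T` times the dissipation `ν₀ Δt ∑ ‖Wⁱ‖₁²`
already contained in the energy `𝓔ₙ₋₁` (the left-hand side of the estimate at step `n - 1`), so
`𝓔ₙ ≤ (1 + βΔt) 𝓔ₙ₋₁ + c Δt³ δ²` with `c = 2 K₁² μB² / ν₀` and `β = c T / ν₀`. Discrete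
Grönwall with `𝓔₀ = 0` yields `𝓔ₙ ≤ c T e^{βT} Δt² δ²`, and `Δt ≤ T`.
-/

open scoped BigOperators RealInnerProductSpace

open Finset Real

theorem two_mul_le_mul_sq_add_sq_div {ε : ℝ} (hε : 0 < ε) (p q : ℝ) :
    2 * p * q ≤ ε * p ^ 2 + q ^ 2 / ε := by
  have h : ε * p ^ 2 + q ^ 2 / ε - 2 * p * q = (ε * p - q) ^ 2 / ε := by
    field_simp
    ring
  nlinarith [h, div_nonneg (sq_nonneg (ε * p - q)) hε.le]

theorem sq_sum_add_le {ι : Type*} (s : Finset ι) (f : ι → ℝ) (d : ℝ) :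
    (∑ i ∈ s, f i + d) ^ 2 ≤ 2 * (#s * ∑ i ∈ s, f i ^ 2 + d ^ 2) := by
  have hcs := sq_sum_le_card_mul_sum_sq (s := s) (f := f)
  calc (∑ i ∈ s, f i + d) ^ 2 ≤ 2 * ((∑ i ∈ s, f i) ^ 2 + d ^ 2) := add_sq_le
    _ ≤ _ := by gcongr

theorem abs_sum_mul_add_mul_le {ι : Type*} (s : Finset ι) {w g b : ι → ℝ} {w₀ e K μ a δ : ℝ}
    (hw : ∀ i ∈ s, |w i| ≤ K) (hg : ∀ i ∈ s, |g i| ≤ μ * b i * a)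
    (hw₀ : |w₀| ≤ K) (he : |e| ≤ μ * δ * a) :
    |∑ i ∈ s, w i * g i + w₀ * e| ≤ K * μ * a * (∑ i ∈ s, b i + δ) := by
  have hK : 0 ≤ K := (abs_nonneg w₀).trans hw₀
  have hterm : ∀ i ∈ s, |w i * g i| ≤ K * μ * a * b i := fun i hi => by
    rw [abs_mul]
    nlinarith [mul_le_mul (hw i hi) (hg i hi) (abs_nonneg _) hK]
  calc |∑ i ∈ s, w i * g i + w₀ * e|
      ≤ ∑ i ∈ s, |w i * g i| + |w₀ * e| :=
        (abs_add_le _ _).trans (by gcongr; exact abs_sum_le_sum_abs _ _)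
    _ ≤ ∑ i ∈ s, K * μ * a * b i + K * (μ * δ * a) := by
        rw [abs_mul]
        gcongr with i hi
        exact hterm i hi
    _ = K * μ * a * (∑ i ∈ s, b i + δ) := by rw [mul_add, mul_sum]; ring

theorem le_sqrt_mul_sqrt_mul_of_sq_le {x C Δt δ : ℝ} (hx : 0 ≤ x) (hC : 0 ≤ C) (hδ : 0 ≤ δ)
    (h : x ^ 2 ≤ C * Δt * δ ^ 2) : x ≤ √C * √Δt * δ := by
  rw [← Real.sqrt_mul hC, ← Real.sqrt_sq hδ, ← Real.sqrt_mul' _ (sq_nonneg δ), ← Real.sqrt_sq hx]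
  exact Real.sqrt_le_sqrt h

theorem discrete_gronwall_of_forall_lt {u : ℕ → ℝ} {a b : ℝ} {n : ℕ} (ha : 0 ≤ a) (hb : 0 ≤ b)
    (hu0 : 0 ≤ u 0) (hun : 0 ≤ u n) (hu : ∀ k < n, u (k + 1) ≤ (1 + a) * u k + b) :
    u n ≤ (u 0 + n * b) * exp (n * a) := by
  -- freezing `u` after step `n` makes the recursion hold at every index
  have key := discrete_gronwall (u := fun k => u (min k n)) (c := fun _ => a) (b := fun _ => b)
    (n₀ := 0) (by simpa using hu0) (fun k _ => ?_) (fun _ _ => ha) (fun _ _ => hb) (Nat.zero_le n)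
  · simpa [mul_comm] using key
  · rcases lt_or_ge k n with hk | hk
    · simpa [min_eq_left hk.le, min_eq_left (Nat.succ_le_of_lt hk)] using hu k hk
    · simp only [min_eq_right hk, min_eq_right (hk.trans (Nat.le_succ k))]
      nlinarith

theorem le_mul_exp_of_le_one_add_mul {u : ℕ → ℝ} {a b Δt T : ℝ} {N n : ℕ} (ha : 0 ≤ a)
    (hb : 0 ≤ b) (hΔt : 0 < Δt) (hN : 1 ≤ N) (hNT : N * Δt = T) (hnN : n ≤ N)
    (hu0 : u 0 = 0) (hun : 0 ≤ u n) (hu : ∀ k < n, u (k + 1) ≤ (1 + a * Δt) * u k + b * Δt ^ 3) :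
    u n ≤ b * T ^ 2 * exp (a * T) * Δt := by
  have hnT : n * Δt ≤ T := hNT ▸ by gcongr
  have hΔtT : Δt ≤ T := hNT ▸ le_mul_of_one_le_left hΔt.le (by exact_mod_cast hN)
  have hT : 0 ≤ T := hΔt.le.trans hΔtT
  calc u n ≤ (u 0 + n * (b * Δt ^ 3)) * exp (n * (a * Δt)) :=
        discrete_gronwall_of_forall_lt (by positivity) (by positivity) (by rw [hu0]) hun hu
    _ = b * (n * Δt) * Δt * Δt * exp (a * (n * Δt)) := by rw [hu0]; ring_nf
    _ ≤ b * T * T * Δt * exp (a * T) := by gcongr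
    _ = b * T ^ 2 * exp (a * T) * Δt := by ring

section DiscreteEnergy

variable {H : Type*} [NormedAddCommGroup H] (norm1 : H → ℝ) (ν₀ Δt : ℝ) (W : ℕ → H)

def discreteEnergy (n : ℕ) : ℝ :=
  ‖W n‖ ^ 2 + ∑ i ∈ Icc 1 n, ‖W i - W (i - 1)‖ ^ 2 + ν₀ * Δt * ∑ i ∈ Icc 1 n, norm1 (W i) ^ 2

theorem discreteEnergy_zero (hW0 : W 0 = 0) : discreteEnergy norm1 ν₀ Δt W 0 = 0 := by
  simp [discreteEnergy, hW0]

theorem discreteEnergy_succ (n : ℕ) :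
    discreteEnergy norm1 ν₀ Δt W (n + 1) = discreteEnergy norm1 ν₀ Δt W n
      + (‖W (n + 1)‖ ^ 2 - ‖W n‖ ^ 2 + ‖W (n + 1) - W n‖ ^ 2
        + ν₀ * Δt * norm1 (W (n + 1)) ^ 2) := by
  simp only [discreteEnergy, sum_Icc_succ_top (Nat.le_add_left 1 n), Nat.add_sub_cancel]
  ring

theorem mul_sum_sq_le_discreteEnergy (n : ℕ) :
    ν₀ * Δt * ∑ i ∈ Icc 1 n, norm1 (W i) ^ 2 ≤ discreteEnergy norm1 ν₀ Δt W n := by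
  unfold discreteEnergy
  have : 0 ≤ ∑ i ∈ Icc 1 n, ‖W i - W (i - 1)‖ ^ 2 := by positivity
  nlinarith [sq_nonneg ‖W n‖]

theorem sq_norm_le_discreteEnergy {ν₀ Δt : ℝ} (hν₀ : 0 ≤ ν₀) (hΔt : 0 ≤ Δt) (n : ℕ) :
    ‖W n‖ ^ 2 ≤ discreteEnergy norm1 ν₀ Δt W n := by
  unfold discreteEnergy
  have : 0 ≤ ∑ i ∈ Icc 1 n, ‖W i - W (i - 1)‖ ^ 2 := by positivity
  have : 0 ≤ ν₀ * Δt * ∑ i ∈ Icc 1 n, norm1 (W i) ^ 2 := by positivity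
  linarith

theorem discreteEnergy_nonneg {ν₀ Δt : ℝ} (hν₀ : 0 ≤ ν₀) (hΔt : 0 ≤ Δt) (n : ℕ) :
    0 ≤ discreteEnergy norm1 ν₀ Δt W n :=
  (sq_nonneg _).trans (sq_norm_le_discreteEnergy norm1 W hν₀ hΔt n)

theorem discreteEnergy_succ_le {ν₀ Δt : ℝ} {κ δ T : ℝ} {n : ℕ} (hν₀ : 0 < ν₀) (hΔt : 0 < Δt)
    (hnT : n * Δt ≤ T)
    (hstep : ‖W (n + 1)‖ ^ 2 - ‖W n‖ ^ 2 + ‖W (n + 1) - W n‖ ^ 2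
        + ν₀ * Δt * norm1 (W (n + 1)) ^ 2
      ≤ Δt ^ 3 * κ ^ 2 * (∑ i ∈ Icc 1 n, norm1 (W i) + δ) ^ 2 / ν₀) :
    discreteEnergy norm1 ν₀ Δt W (n + 1)
      ≤ (1 + 2 * κ ^ 2 * T / ν₀ ^ 2 * Δt) * discreteEnergy norm1 ν₀ Δt W n
        + 2 * κ ^ 2 / ν₀ * δ ^ 2 * Δt ^ 3 := by
  set S := ∑ i ∈ Icc 1 n, norm1 (W i) ^ 2
  have hCS : (∑ i ∈ Icc 1 n, norm1 (W i) + δ) ^ 2 ≤ 2 * (n * S + δ ^ 2) := by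
    simpa using sq_sum_add_le (Icc 1 n) (fun i => norm1 (W i)) δ
  have hS := mul_sum_sq_le_discreteEnergy norm1 ν₀ Δt W n
  have hT : 0 ≤ T := (by positivity : (0 : ℝ) ≤ n * Δt).trans hnT
  have hmem : Δt ^ 3 * κ ^ 2 * (∑ i ∈ Icc 1 n, norm1 (W i) + δ) ^ 2 / ν₀
      ≤ 2 * κ ^ 2 * T / ν₀ ^ 2 * Δt * discreteEnergy norm1 ν₀ Δt W n
        + 2 * κ ^ 2 / ν₀ * δ ^ 2 * Δt ^ 3 :=
    calc _ ≤ Δt ^ 3 * κ ^ 2 * (2 * (n * S + δ ^ 2)) / ν₀ := by gcongr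
      _ = 2 * κ ^ 2 / ν₀ ^ 2 * Δt * (n * Δt) * (ν₀ * Δt * S)
            + 2 * κ ^ 2 / ν₀ * δ ^ 2 * Δt ^ 3 := by field_simp
      _ ≤ 2 * κ ^ 2 / ν₀ ^ 2 * Δt * T * discreteEnergy norm1 ν₀ Δt W n
            + 2 * κ ^ 2 / ν₀ * δ ^ 2 * Δt ^ 3 := by gcongr
      _ = _ := by ring
  rw [discreteEnergy_succ]
  linarith

end DiscreteEnergy

section InnerProduct

variable {H : Type*} [NormedAddCommGroup H] [InnerProductSpace ℝ H]

theorem two_mul_inner_sub_self (x y : H) :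
    2 * ⟪x - y, x⟫ = ‖x‖ ^ 2 - ‖y‖ ^ 2 + ‖x - y‖ ^ 2 := by
  rw [norm_sub_sq_real, inner_sub_left, real_inner_self_eq_norm_sq, real_inner_comm]
  ring

theorem energy_step {x y : H} {a c r κ X ν₀ Δt : ℝ} (hν₀ : 0 < ν₀) (hΔt : 0 < Δt)
    (hc : ν₀ * a ^ 2 ≤ c) (hr : |r| ≤ κ * a * X) (hscheme : ⟪x - y, x⟫ / Δt + c + Δt * r = 0) :
    ‖x‖ ^ 2 - ‖y‖ ^ 2 + ‖x - y‖ ^ 2 + ν₀ * Δt * a ^ 2 ≤ Δt ^ 3 * κ ^ 2 * X ^ 2 / ν₀ := by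
  have hid : ‖x‖ ^ 2 - ‖y‖ ^ 2 + ‖x - y‖ ^ 2 = -2 * Δt * c - 2 * Δt ^ 2 * r := by
    rw [← two_mul_inner_sub_self]
    field_simp at hscheme
    linear_combination 2 * hscheme
  have hyoung := two_mul_le_mul_sq_add_sq_div (mul_pos hν₀ hΔt) a (Δt ^ 2 * κ * X)
  have hq : (Δt ^ 2 * κ * X) ^ 2 / (ν₀ * Δt) = Δt ^ 3 * κ ^ 2 * X ^ 2 / ν₀ := by
    field_simp
  nlinarith [neg_abs_le r, mul_le_mul_of_nonneg_left hc hΔt.le, sq_nonneg Δt]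

end InnerProduct

/-- A priori error estimate for two-grid Algorithm 4.2 (core of Theorem 4.6). -/
theorem two_grid_alg42_error
    (T ν₀ μB K₁ : ℝ) (hT : 0 < T) (hν₀ : 0 < ν₀) (hμB : 0 < μB) (hK₁ : 0 < K₁) :
    ∃ C : ℝ, 0 < C ∧
      ∀ (H : Type) [NormedAddCommGroup H] [InnerProductSpace ℝ H]
        (norm1 : H → ℝ), (∀ x, 0 ≤ norm1 x) →
      ∀ A : H →ₗ[ℝ] H →ₗ[ℝ] ℝ, (∀ v, ν₀ * (norm1 v) ^ 2 ≤ A v v) →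
      ∀ Δt : ℝ, 0 < Δt → ∀ N : ℕ, 1 ≤ N → (N : ℝ) * Δt = T →
      ∀ ω : ℕ → ℕ → ℝ, (∀ n i, 1 ≤ i → i ≤ n → n ≤ N → |ω n i| ≤ K₁) →
      ∀ δ : ℝ, 0 ≤ δ →
      ∀ W : ℕ → H, W 0 = 0 →
      ∀ G E : ℕ → H → ℝ,
        (∀ i, 1 ≤ i → i ≤ N → ∀ v : H, |G i v| ≤ μB * norm1 (W i) * norm1 v) →
        (∀ n, 1 ≤ n → n ≤ N → ∀ v : H, |E n v| ≤ μB * δ * norm1 v) →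
        (∀ n, 1 ≤ n → n ≤ N → ∀ v : H,
          ⟪W n - W (n - 1), v⟫ / Δt + A (W n) v
            + Δt * ∑ i ∈ Finset.Icc 1 (n - 1), ω n i * G i v
            + Δt * ω n n * E n v = 0) →
        ∀ n, 1 ≤ n → n ≤ N →
          ‖W n‖ ^ 2 + ∑ i ∈ Finset.Icc 1 n, ‖W i - W (i - 1)‖ ^ 2
              + ν₀ * Δt * ∑ i ∈ Finset.Icc 1 n, (norm1 (W i)) ^ 2
            ≤ C * Δt * δ ^ 2 ∧
          ‖W n‖ ≤ Real.sqrt C * Real.sqrt Δt * δ := by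
  set κ := K₁ * μB
  set C := 2 * κ ^ 2 / ν₀ * T ^ 2 * exp (2 * κ ^ 2 * T / ν₀ ^ 2 * T)
  refine ⟨C, by positivity, ?_⟩
  intro H _ _ norm1 _ A hA Δt hΔt N hN hNT ω hω δ hδ W hW0 G E hG hE hscheme n hn1 hnN
  have hrec : ∀ m < n, discreteEnergy norm1 ν₀ Δt W (m + 1)
      ≤ (1 + 2 * κ ^ 2 * T / ν₀ ^ 2 * Δt) * discreteEnergy norm1 ν₀ Δt W m
        + 2 * κ ^ 2 / ν₀ * δ ^ 2 * Δt ^ 3 := by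
    intro m hm
    have hmN : m + 1 ≤ N := hm.trans_le hnN
    have hs := hscheme (m + 1) (Nat.le_add_left 1 m) hmN (W (m + 1))
    rw [Nat.add_sub_cancel] at hs
    have hmem := abs_sum_mul_add_mul_le (Icc 1 m)
      (fun i hi => hω (m + 1) i (mem_Icc.1 hi).1 ((mem_Icc.1 hi).2.trans m.le_succ) hmN)
      (fun i hi => hG i (mem_Icc.1 hi).1 ((mem_Icc.1 hi).2.trans (m.le_succ.trans hmN)) _)
      (hω (m + 1) (m + 1) (Nat.le_add_left 1 m) le_rfl hmN)
      (hE (m + 1) (Nat.le_add_left 1 m) hmN (W (m + 1)))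
    refine discreteEnergy_succ_le norm1 W hν₀ hΔt (hNT ▸ by gcongr; omega) ?_
    exact energy_step hν₀ hΔt (hA _) hmem (by linear_combination hs)
  have hbound := le_mul_exp_of_le_one_add_mul (a := 2 * κ ^ 2 * T / ν₀ ^ 2)
    (b := 2 * κ ^ 2 / ν₀ * δ ^ 2) (by positivity) (by positivity) hΔt hN hNT hnN
    (discreteEnergy_zero norm1 ν₀ Δt W hW0) (discreteEnergy_nonneg norm1 W hν₀.le hΔt.le n) hrec
  replace hbound := hbound.trans_eq (by ring : _ = C * Δt * δ ^ 2)
  exact ⟨hbound, le_sqrt_mul_sqrt_mul_of_sq_le (norm_nonneg _) (by positivity) hδ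
    ((sq_norm_le_discreteEnergy norm1 W hν₀.le hΔt.le n).trans hbound)⟩
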